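/- Let G be a finite tree rooted at r, and for each vertex v let G_v be the subtree rooted at v. Define c(v) = 0 if v is a leaf of G_v (has no children), and otherwise c(v) = 1 + (sum of c(v_i) over all children v_i of v) − min_i c(v_i). Then c(v) equals the maximum size of a core of G_v containing v, where a core of G_v is a subset X with G_v[X] connected and every x ∈ X having a neighbor in G_v outside X (and c(v)=0 means no such core exists). -/

import Mathlib

open scoped Classical

/-- The vertex set of the subtree of the tree `G`, rooted at `r`, below `v`:
those `u` such that `v` lies on the path from `r` to `u`. -/
def subtreeSet {V : Type*} (G : SimpleGraph V) (r v : V) : Set V :=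
  {u | G.dist r u = G.dist r v + G.dist v u}

/-- The children of `v` in the tree `G` rooted at `r`. -/
noncomputable def children {V : Type*} [Fintype V] (G : SimpleGraph V) (r v : V) :
    Finset V :=
  Finset.univ.filter fun u => G.Adj v u ∧ G.dist r u = G.dist r v + 1

/-- The possible sizes of cores of the subtree `G_v` containing `v`:
`X ⊆ G_v`, `v ∈ X`, `X` induces a connected subgraph, and every vertex of `X`
has a neighbor inside `G_v` but outside `X`. -/
def coreSizes {V : Type*} (G : SimpleGraph V) (r v : V) : Set ℕ :=
  { n | ∃ X : Finset V, (X : Set V) ⊆ subtreeSet G r v ∧ v ∈ X ∧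
      (G.induce (X : Set V)).Connected ∧
      (∀ x ∈ X, ∃ y ∈ subtreeSet G r v, y ∉ X ∧ G.Adj x y) ∧
      X.card = n }

/-!
If `X` is a core of `G_v` containing `v` and `u` is a child of `v`, then `X ∩ G_u` is either empty
or a core of `G_u` containing `u`: in a tree the only edge leaving `G_u` is the edge from `u` to
`v`. Moreover the neighbour of `v` outside `X` is a child `y` with `X ∩ G_y = ∅`. Hence
`|X| ≤ 1 + ∑ c(u) - min c(u)`. Conversely, `v` together with maximal cores of all children but
one child of minimal `c` is a core of exactly this size, `v` having that child as neighbour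
outside it.
-/

open SimpleGraph

section

variable {V : Type*} {G : SimpleGraph V} {r : V}

theorem Finset.sum_add_inf'_le_sum {ι M : Type*} [AddCommMonoid M] [LinearOrder M]
    [IsOrderedAddMonoid M] {s : Finset ι} (hs : s.Nonempty) {f g : ι → M}
    (hfg : ∀ i ∈ s, f i ≤ g i) {j : ι} (hj : j ∈ s) (hfj : f j = 0) :
    ∑ i ∈ s, f i + s.inf' hs g ≤ ∑ i ∈ s, g i := by
  classical
  rw [← Finset.sum_erase_add s f hj, ← Finset.sum_erase_add s g hj, hfj, add_zero]
  gcongr with i hi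
  exacts [hfg i (Finset.mem_of_mem_erase hi), Finset.inf'_le g hj]

theorem Nat.eq_sSup_of_isGreatest_insert_zero {S : Set ℕ} {m : ℕ} (h0 : 0 ∉ S)
    (h : IsGreatest (insert 0 S) m) : m = sSup S ∧ (S.Nonempty → m ∈ S) := by
  obtain rfl | ⟨n, hn⟩ := S.eq_empty_or_nonempty
  · obtain rfl : m = 0 := by simpa using h.1
    simp
  have hm : m ∈ S := by
    obtain rfl | hm := h.1
    · obtain rfl := Nat.le_zero.mp (h.2 (Or.inr hn))
      exact absurd hn h0
    · exact hm
  exact ⟨(IsGreatest.csSup_eq ⟨hm, fun k hk ↦ h.2 (Or.inr hk)⟩).symm, fun _ ↦ hm⟩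

theorem SimpleGraph.Connected.exists_adj_dist_add_one_eq (hG : G.Connected) {u v : V}
    (huv : u ≠ v) : ∃ w, G.Adj u w ∧ G.dist w v + 1 = G.dist u v := by
  obtain ⟨p, hp⟩ := hG.exists_walk_length_eq_dist u v
  cases p with
  | nil => exact absurd rfl huv
  | @cons _ w _ hadj q =>
    have h₁ := dist_le q
    have h₂ := hG.dist_triangle (u := u) (v := w) (w := v)
    rw [dist_eq_one_iff_adj.mpr hadj] at h₂
    rw [Walk.length_cons] at hp
    exact ⟨w, hadj, by omega⟩

theorem SimpleGraph.Connected.induce_of_forall_adj_eq {s t : Set V} {a : V}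
    (hs : (G.induce s).Connected) (hts : t ⊆ s) (ha : a ∈ t)
    (hexit : ∀ x ∈ t, ∀ y ∈ s, y ∉ t → G.Adj x y → x = a) :
    (G.induce t).Connected := by
  suffices h : ∀ (y z : s) (_ : (G.induce s).Walk y z) (hy : y.1 ∈ t), z.1 = a →
      (G.induce t).Reachable ⟨y, hy⟩ ⟨a, ha⟩ by
    rw [connected_iff_exists_forall_reachable]
    refine ⟨⟨a, ha⟩, fun ⟨y, hy⟩ ↦ ?_⟩
    obtain ⟨p⟩ := hs.preconnected ⟨y, hts hy⟩ ⟨a, hts ha⟩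
    exact (h _ _ p hy rfl).symm
  intro y z p
  induction p with
  | nil => rintro hy rfl; rfl
  | @cons x w _ hxw _ ih =>
    intro hx hz
    by_cases hw : w.1 ∈ t
    · exact (Adj.reachable (G := G.induce t) (u := ⟨x, hx⟩) (v := ⟨w, hw⟩) hxw).trans
        (ih hw hz)
    · obtain rfl : x.1 = a := hexit _ hx _ w.2 hw hxw
      rfl

theorem mem_subtreeSet {u v : V} :
    u ∈ subtreeSet G r v ↔ G.dist r u = G.dist r v + G.dist v u :=
  Iff.rfl

theorem mem_subtreeSet_self (v : V) : v ∈ subtreeSet G r v := by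
  simp [mem_subtreeSet]

theorem mem_subtreeSet_trans (hG : G.Connected) {u a x : V} (ha : a ∈ subtreeSet G r u)
    (hx : x ∈ subtreeSet G r a) : x ∈ subtreeSet G r u := by
  have := hG.dist_triangle (u := r) (v := u) (w := x)
  have := hG.dist_triangle (u := u) (v := a) (w := x)
  rw [mem_subtreeSet] at *
  omega

section Children

variable [Fintype V]

theorem mem_children_iff {u v : V} :
    u ∈ children G r v ↔ G.Adj v u ∧ G.dist r u = G.dist r v + 1 := by
  simp [children]

theorem mem_subtreeSet_of_mem_children {u v : V} (hu : u ∈ children G r v) :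
    u ∈ subtreeSet G r v := by
  obtain ⟨hadj, hd⟩ := mem_children_iff.mp hu
  rw [mem_subtreeSet, dist_eq_one_iff_adj.mpr hadj, hd]

theorem subtreeSet_subset_of_mem_children (hG : G.Connected) {u v : V}
    (hu : u ∈ children G r v) : subtreeSet G r u ⊆ subtreeSet G r v :=
  fun _ ↦ mem_subtreeSet_trans hG (mem_subtreeSet_of_mem_children hu)

theorem notMem_subtreeSet_of_mem_children {u v : V} (hu : u ∈ children G r v) :
    v ∉ subtreeSet G r u := by
  have hd := (mem_children_iff.mp hu).2
  rw [mem_subtreeSet]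
  omega

theorem mem_children_of_adj {v u : V} (hadj : G.Adj v u) (hu : u ∈ subtreeSet G r v) :
    u ∈ children G r v := by
  rw [mem_subtreeSet, dist_eq_one_iff_adj.mpr hadj] at hu
  exact mem_children_iff.mpr ⟨hadj, hu⟩

theorem exists_mem_children_mem_subtreeSet (hG : G.Connected) {v x : V}
    (hx : x ∈ subtreeSet G r v) (hxv : x ≠ v) :
    ∃ u ∈ children G r v, x ∈ subtreeSet G r u := by
  obtain ⟨u, hadj, hu⟩ := hG.exists_adj_dist_add_one_eq hxv.symm
  have := hG.dist_triangle (u := r) (v := v) (w := u)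
  have := hG.dist_triangle (u := r) (v := u) (w := x)
  have := dist_eq_one_iff_adj.mpr hadj
  rw [mem_subtreeSet] at hx
  exact ⟨u, mem_children_iff.mpr ⟨hadj, by omega⟩, mem_subtreeSet.mpr (by omega)⟩

theorem exists_parent_mem_subtreeSet (hG : G.Connected) {u x : V}
    (hx : x ∈ subtreeSet G r u) (hxu : x ≠ u) :
    ∃ p, x ∈ children G r p ∧ p ∈ subtreeSet G r u ∧ G.dist u p < G.dist u x := by
  obtain ⟨p, hadj, hp⟩ := hG.exists_adj_dist_add_one_eq hxu
  have := hG.dist_triangle (u := r) (v := u) (w := p)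
  have := hG.dist_triangle (u := r) (v := p) (w := x)
  have := dist_eq_one_iff_adj.mpr hadj.symm
  have := dist_comm (G := G) (u := p) (v := u)
  have := dist_comm (G := G) (u := x) (v := u)
  rw [mem_subtreeSet] at hx
  exact ⟨p, mem_children_iff.mpr ⟨hadj.symm, by omega⟩, mem_subtreeSet.mpr (by omega),
    by omega⟩

theorem eq_insert_biUnion_filter {v : V} {X : Finset V} (hG : G.Connected)
    (hXv : (X : Set V) ⊆ subtreeSet G r v) (hv : v ∈ X) :
    X = insert v ((children G r v).biUnion fun u ↦ X.filter (· ∈ subtreeSet G r u)) := by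
  ext x
  simp only [Finset.mem_insert, Finset.mem_biUnion, Finset.mem_filter]
  constructor
  · intro hx
    obtain rfl | hxv := eq_or_ne x v
    · exact Or.inl rfl
    · obtain ⟨u, hu, hxu⟩ := exists_mem_children_mem_subtreeSet hG (hXv hx) hxv
      exact Or.inr ⟨u, hu, hx, hxu⟩
  · rintro (rfl | ⟨u, -, hx, -⟩)
    exacts [hv, hx]

theorem subtree_induction (hG : G.Connected) {P : V → Prop}
    (ih : ∀ v, (∀ u ∈ children G r v, P u) → P v) (v : V) : P v :=
  (measure fun v ↦ (subtreeSet G r v).ncard).wf.induction v fun v h ↦ ih v fun u hu ↦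
    h u <| Set.ncard_lt_ncard <| (subtreeSet_subset_of_mem_children hG hu).ssubset_of_not_subset
      fun h ↦ notMem_subtreeSet_of_mem_children hu (h (mem_subtreeSet_self v))

end Children

section Tree

variable [Fintype V]

theorem eq_of_mem_children_of_mem_children (hG : G.IsTree) {a b b' : V}
    (hb : a ∈ children G r b) (hb' : a ∈ children G r b') : b = b' := by
  obtain ⟨hadj, hd⟩ := mem_children_iff.mp hb
  obtain ⟨hadj', hd'⟩ := mem_children_iff.mp hb'
  obtain ⟨p, hp⟩ := hG.connected.exists_walk_length_eq_dist r b
  obtain ⟨p', hp'⟩ := hG.connected.exists_walk_length_eq_dist r b'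
  have hpath : (p.concat hadj).IsPath :=
    (p.concat hadj).isPath_of_length_eq_dist (by rw [Walk.length_concat, hp, hd])
  have hpath' : (p'.concat hadj').IsPath :=
    (p'.concat hadj').isPath_of_length_eq_dist (by rw [Walk.length_concat, hp', hd'])
  obtain ⟨h, -⟩ := Walk.concat_inj ((hG.existsUnique_path r a).unique hpath hpath')
  exact h

theorem mem_subtreeSet_of_mem_children_of_ne (hG : G.IsTree) {a b w : V}
    (hab : a ∈ children G r b) (ha : a ∈ subtreeSet G r w) (haw : a ≠ w) :
    b ∈ subtreeSet G r w := by
  obtain ⟨p, hp, hpw, -⟩ := exists_parent_mem_subtreeSet hG.connected ha haw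
  rwa [eq_of_mem_children_of_mem_children hG hab hp]

theorem eq_of_mem_subtreeSet_of_dist_eq (hG : G.IsTree) {u w x : V}
    (hu : x ∈ subtreeSet G r u) (hw : x ∈ subtreeSet G r w) (hd : G.dist r u = G.dist r w) :
    u = w := by
  induction hn : G.dist u x using Nat.strong_induction_on generalizing x with
  | _ n ih =>
    have hwx : G.dist w x = G.dist u x := by rw [mem_subtreeSet] at hu hw; omega
    by_cases hxu : x = u
    · subst hxu
      exact (hG.connected.dist_eq_zero_iff.mp (by simpa using hwx)).symm
    obtain ⟨p, hxp, hpu, hlt⟩ := exists_parent_mem_subtreeSet hG.connected hu hxu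
    have hxw : x ≠ w := by
      rintro rfl
      rw [dist_self] at hwx
      exact hxu (hG.connected.dist_eq_zero_iff.mp hwx.symm).symm
    exact ih _ (hn ▸ hlt) hpu (mem_subtreeSet_of_mem_children_of_ne hG hxp hw hxw) rfl

theorem eq_of_mem_children_of_mem_subtreeSet (hG : G.IsTree) {v u w x : V}
    (hu : u ∈ children G r v) (hw : w ∈ children G r v) (hxu : x ∈ subtreeSet G r u)
    (hxw : x ∈ subtreeSet G r w) :
    u = w :=
  eq_of_mem_subtreeSet_of_dist_eq hG hxu hxw
    ((mem_children_iff.mp hu).2.trans (mem_children_iff.mp hw).2.symm)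

theorem eq_and_mem_children_of_adj_of_notMem (hG : G.IsTree) {u a b : V}
    (ha : a ∈ subtreeSet G r u) (hb : b ∉ subtreeSet G r u) (hab : G.Adj a b) :
    a = u ∧ u ∈ children G r b := by
  rcases hG.dist_eq_dist_add_one_of_adj r hab with hd | hd
  · have hab' : a ∈ children G r b := mem_children_iff.mpr ⟨hab.symm, hd⟩
    by_cases hau : a = u
    · exact ⟨hau, hau ▸ hab'⟩
    · exact absurd (mem_subtreeSet_of_mem_children_of_ne hG hab' ha hau) hb
  · have hba : b ∈ children G r a := mem_children_iff.mpr ⟨hab, hd⟩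
    exact absurd (mem_subtreeSet_trans hG.connected ha (mem_subtreeSet_of_mem_children hba)) hb

end Tree

structure IsSubtreeCore (G : SimpleGraph V) (r v : V) (X : Finset V) : Prop where
  subset : (X : Set V) ⊆ subtreeSet G r v
  mem : v ∈ X
  connected : (G.induce (X : Set V)).Connected
  exists_adj : ∀ x ∈ X, ∃ y ∈ subtreeSet G r v, y ∉ X ∧ G.Adj x y

theorem mem_coreSizes {v : V} {n : ℕ} :
    n ∈ coreSizes G r v ↔ ∃ X, IsSubtreeCore G r v X ∧ X.card = n := by
  simp only [coreSizes, Set.mem_ofPred_eq]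
  exact exists_congr fun X ↦
    ⟨fun ⟨h₁, h₂, h₃, h₄, h₅⟩ ↦ ⟨⟨h₁, h₂, h₃, h₄⟩, h₅⟩,
      fun ⟨⟨h₁, h₂, h₃, h₄⟩, h₅⟩ ↦ ⟨h₁, h₂, h₃, h₄, h₅⟩⟩

theorem zero_notMem_coreSizes {v : V} : 0 ∉ coreSizes G r v := by
  rw [mem_coreSizes]
  rintro ⟨X, hX, hcard⟩
  exact Finset.card_ne_zero_of_mem hX.mem hcard

theorem mem_insert_zero_coreSizes {v : V} {n : ℕ} :
    n ∈ insert 0 (coreSizes G r v) ↔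
      ∃ Y : Finset V, (Y.Nonempty → IsSubtreeCore G r v Y) ∧ Y.card = n := by
  rw [Set.mem_insert_iff, mem_coreSizes]
  constructor
  · rintro (rfl | ⟨Y, hY, rfl⟩)
    · exact ⟨∅, by simp, rfl⟩
    · exact ⟨Y, fun _ ↦ hY, rfl⟩
  · rintro ⟨Y, hY, rfl⟩
    obtain rfl | hne := Y.eq_empty_or_nonempty
    · exact Or.inl rfl
    · exact Or.inr ⟨Y, hY hne, rfl⟩

section CoreDecomposition

variable [Fintype V] (hG : G.IsTree)
include hG

theorem card_insert_biUnion {v : V} {D : Finset V} {Y : V → Finset V}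
    (hD : D ⊆ children G r v) (hY : ∀ u ∈ D, (Y u : Set V) ⊆ subtreeSet G r u) :
    (insert v (D.biUnion Y)).card = 1 + ∑ u ∈ D, (Y u).card := by
  have hv : v ∉ D.biUnion Y := by
    simp only [Finset.mem_biUnion, not_exists, not_and]
    exact fun u hu hvu ↦ notMem_subtreeSet_of_mem_children (hD hu) (hY u hu hvu)
  have hdisj : (D : Set V).PairwiseDisjoint Y := fun u hu w hw huw ↦
    Finset.disjoint_left.mpr fun x hxu hxw ↦ huw <|
      eq_of_mem_children_of_mem_subtreeSet hG (hD hu) (hD hw) (hY u hu hxu) (hY w hw hxw)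
  rw [Finset.card_insert_of_notMem hv, Finset.card_biUnion hdisj, add_comm]

theorem card_eq_one_add_sum_card_filter {v : V} {X : Finset V}
    (hXv : (X : Set V) ⊆ subtreeSet G r v) (hv : v ∈ X) :
    X.card = 1 + ∑ u ∈ children G r v, (X.filter (· ∈ subtreeSet G r u)).card := by
  conv_lhs => rw [eq_insert_biUnion_filter hG.connected hXv hv]
  exact card_insert_biUnion hG subset_rfl fun u _ x hx ↦ (Finset.mem_filter.mp hx).2

namespace IsSubtreeCore

variable {v : V} {X : Finset V} (hX : IsSubtreeCore G r v X)
include hX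

theorem mem_of_mem_subtreeSet {u x : V} (hu : u ∈ children G r v) (hx : x ∈ X)
    (hxu : x ∈ subtreeSet G r u) : u ∈ X := by
  obtain ⟨p⟩ := hX.connected.preconnected ⟨x, hx⟩ ⟨v, hX.mem⟩
  obtain ⟨d, -, hd₁, hd₂⟩ :=
    p.exists_boundary_dart {z | z.1 ∈ subtreeSet G r u} hxu (notMem_subtreeSet_of_mem_children hu)
  obtain ⟨rfl, -⟩ := eq_and_mem_children_of_adj_of_notMem hG hd₁ hd₂ d.adj
  exact d.fst.2

theorem filter_subtreeSet {u : V} (hu : u ∈ children G r v)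
    (hne : (X.filter (· ∈ subtreeSet G r u)).Nonempty) :
    IsSubtreeCore G r u (X.filter (· ∈ subtreeSet G r u)) := by
  obtain ⟨x, hx⟩ := hne
  rw [Finset.mem_filter] at hx
  have huX : u ∈ X.filter (· ∈ subtreeSet G r u) :=
    Finset.mem_filter.mpr ⟨hX.mem_of_mem_subtreeSet hG hu hx.1 hx.2, mem_subtreeSet_self u⟩
  refine ⟨fun z hz ↦ (Finset.mem_filter.mp hz).2, huX, ?_, fun z hz ↦ ?_⟩
  · refine hX.connected.induce_of_forall_adj_eq (fun z hz ↦ (Finset.mem_filter.mp hz).1) huX ?_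
    intro z hz y hy hyu hzy
    have hyu' : y ∉ subtreeSet G r u := fun h ↦ hyu (Finset.mem_filter.mpr ⟨hy, h⟩)
    exact (eq_and_mem_children_of_adj_of_notMem hG (Finset.mem_filter.mp hz).2 hyu' hzy).1
  · obtain ⟨hzX, hzu⟩ := Finset.mem_filter.mp hz
    obtain ⟨y, -, hyX, hzy⟩ := hX.exists_adj z hzX
    refine ⟨y, ?_, fun h ↦ hyX (Finset.mem_filter.mp h).1, hzy⟩
    by_contra hyu
    obtain ⟨-, huy⟩ := eq_and_mem_children_of_adj_of_notMem hG hzu hyu hzy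
    exact hyX (eq_of_mem_children_of_mem_children hG hu huy ▸ hX.mem)

theorem card_filter_mem_insert_zero_coreSizes {u : V} (hu : u ∈ children G r v) :
    (X.filter (· ∈ subtreeSet G r u)).card ∈ insert 0 (coreSizes G r u) :=
  mem_insert_zero_coreSizes.mpr ⟨_, hX.filter_subtreeSet hG hu, rfl⟩

theorem exists_filter_subtreeSet_eq_empty :
    ∃ y ∈ children G r v, X.filter (· ∈ subtreeSet G r y) = ∅ := by
  obtain ⟨y, hyv, hyX, hvy⟩ := hX.exists_adj v hX.mem
  refine ⟨y, mem_children_of_adj hvy hyv, Finset.filter_eq_empty_iff.mpr fun x hx hxy ↦ ?_⟩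
  exact hyX (hX.mem_of_mem_subtreeSet hG (mem_children_of_adj hvy hyv) hx hxy)

end IsSubtreeCore

theorem isSubtreeCore_insert_biUnion {v w : V} {D : Finset V} {Y : V → Finset V}
    (hw : w ∈ children G r v) (hD : D ⊆ (children G r v).erase w)
    (hY : ∀ u ∈ D, (Y u).Nonempty → IsSubtreeCore G r u (Y u)) :
    IsSubtreeCore G r v (insert v (D.biUnion Y)) := by
  have hDv : ∀ u ∈ D, u ∈ children G r v := fun u hu ↦ Finset.mem_of_mem_erase (hD hu)
  have hYu : ∀ u ∈ D, (Y u : Set V) ⊆ subtreeSet G r u :=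
    fun u hu x hx ↦ (hY u hu ⟨x, hx⟩).subset hx
  have hmem : ∀ {x}, x ∈ insert v (D.biUnion Y) ↔ x = v ∨ ∃ u ∈ D, x ∈ Y u := by
    simp only [Finset.mem_insert, Finset.mem_biUnion, implies_true]
  have hnotMem : ∀ u ∈ children G r v, ∀ y ∈ subtreeSet G r u,
      (∀ u' ∈ D, y ∈ Y u' → u' ≠ u) → y ∉ insert v (D.biUnion Y) := by
    intro u hu y hyu hne hy
    obtain rfl | ⟨u', hu', hyu'⟩ := hmem.mp hy
    · exact notMem_subtreeSet_of_mem_children hu hyu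
    · exact hne u' hu' hyu' <|
        eq_of_mem_children_of_mem_subtreeSet hG (hDv u' hu') hu (hYu u' hu' hyu') hyu
  refine ⟨?_, Finset.mem_insert_self v _, ?_, ?_⟩
  · intro x hx
    obtain rfl | ⟨u, hu, hxu⟩ := hmem.mp hx
    exacts [mem_subtreeSet_self x,
      subtreeSet_subset_of_mem_children hG.connected (hDv u hu) (hYu u hu hxu)]
  · refine induce_connected_of_patches v (Finset.mem_insert_self v _) fun {x} hx ↦ ?_
    obtain rfl | ⟨u, hu, hxu⟩ := hmem.mp hx
    · exact ⟨_, subset_rfl, _, hx, Reachable.refl _⟩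
    have hYcore := hY u hu ⟨x, hxu⟩
    refine ⟨{v} ∪ Y u, ?_, Or.inl rfl, Or.inr hxu, ?_⟩
    · rintro y (rfl | hyu)
      exacts [Finset.mem_insert_self y _, hmem.mpr (Or.inr ⟨u, hu, hyu⟩)]
    · exact (connected_induce_union (s := {v}) Preconnected.of_subsingleton
        hYcore.connected.preconnected rfl hYcore.mem
        (mem_children_iff.mp (hDv u hu)).1).preconnected _ _
  · intro x hx
    obtain rfl | ⟨u, hu, hxu⟩ := hmem.mp hx
    · refine ⟨w, mem_subtreeSet_of_mem_children hw, hnotMem w hw w (mem_subtreeSet_self w) ?_,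
        (mem_children_iff.mp hw).1⟩
      rintro u hu - rfl
      exact Finset.ne_of_mem_erase (hD hu) rfl
    · obtain ⟨y, hyu, hyY, hxy⟩ := (hY u hu ⟨x, hxu⟩).exists_adj x hxu
      refine ⟨y, subtreeSet_subset_of_mem_children hG.connected (hDv u hu) hyu,
        hnotMem u (hDv u hu) y hyu ?_, hxy⟩
      rintro u' - hyu' rfl
      exact hyY hyu'

end CoreDecomposition

section Recursion

variable [Fintype V] (hG : G.IsTree)
include hG

theorem coreSizes_eq_empty_of_children_eq_empty {v : V} (hv : children G r v = ∅) :
    coreSizes G r v = ∅ := by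
  refine Set.eq_empty_of_forall_notMem fun n hn ↦ ?_
  obtain ⟨X, hX, -⟩ := mem_coreSizes.mp hn
  obtain ⟨y, hy, -⟩ := hX.exists_filter_subtreeSet_eq_empty hG
  simp [hv] at hy

theorem IsSubtreeCore.card_add_inf'_le {v : V} {X : Finset V} (hX : IsSubtreeCore G r v X)
    (hne : (children G r v).Nonempty) {f : V → ℕ}
    (hf : ∀ u ∈ children G r v, f u ∈ upperBounds (insert 0 (coreSizes G r u))) :
    X.card + (children G r v).inf' hne f ≤ 1 + ∑ u ∈ children G r v, f u := by
  obtain ⟨y, hy, hXy⟩ := hX.exists_filter_subtreeSet_eq_empty hG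
  have := Finset.sum_add_inf'_le_sum hne
    (fun u hu ↦ hf u hu (hX.card_filter_mem_insert_zero_coreSizes hG hu)) hy (by rw [hXy]; rfl)
  rw [card_eq_one_add_sum_card_filter hG hX.subset hX.mem]
  omega

theorem mem_coreSizes_of_children {v : V} (hne : (children G r v).Nonempty) {f : V → ℕ}
    (hf : ∀ u ∈ children G r v, f u ∈ insert 0 (coreSizes G r u)) :
    1 + ∑ u ∈ children G r v, f u - (children G r v).inf' hne f ∈ coreSizes G r v := by
  obtain ⟨w, hw, hmin⟩ := Finset.exists_mem_eq_inf' hne f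
  choose! Y hY hYcard using fun u hu ↦ mem_insert_zero_coreSizes.mp (hf u hu)
  have hD : (children G r v).erase w ⊆ children G r v := Finset.erase_subset w _
  refine mem_coreSizes.mpr ⟨_, isSubtreeCore_insert_biUnion hG hw subset_rfl
    fun u hu ↦ hY u (hD hu), ?_⟩
  have hsum : ∑ u ∈ (children G r v).erase w, (Y u).card =
      ∑ u ∈ (children G r v).erase w, f u :=
    Finset.sum_congr rfl fun u hu ↦ hYcard u (hD hu)
  rw [card_insert_biUnion hG hD fun u hu x hx ↦ (hY u (hD hu) ⟨x, hx⟩).subset hx, hsum, hmin,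
    ← Finset.sum_erase_add _ f hw]
  omega

theorem isGreatest_coreSizes_of_children {v : V} (hne : (children G r v).Nonempty) {f : V → ℕ}
    (hf : ∀ u ∈ children G r v, IsGreatest (insert 0 (coreSizes G r u)) (f u)) :
    IsGreatest (coreSizes G r v)
      (1 + ∑ u ∈ children G r v, f u - (children G r v).inf' hne f) := by
  refine ⟨mem_coreSizes_of_children hG hne fun u hu ↦ (hf u hu).1, fun n hn ↦ ?_⟩
  obtain ⟨X, hX, rfl⟩ := mem_coreSizes.mp hn
  have := hX.card_add_inf'_le hG hne fun u hu ↦ (hf u hu).2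
  omega

end Recursion

end

/-- the recursively defined quantity `c(v)` equals the maximum
size of a core of the subtree `G_v` containing `v` (and `c(v) = 0` exactly when
no such core exists, e.g. for leaves of `G_v`). -/
theorem core_recursion {V : Type*} [Fintype V] (G : SimpleGraph V)
    (hG : G.IsTree) (r : V) (c : V → ℕ)
    (hleaf : ∀ v, children G r v = ∅ → c v = 0)
    (hrec : ∀ v (h : (children G r v).Nonempty),
      c v = 1 + ∑ u ∈ children G r v, c u - (children G r v).inf' h c) :
    ∀ v : V, c v = sSup (coreSizes G r v) ∧
      ((coreSizes G r v).Nonempty → c v ∈ coreSizes G r v) := by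
  -- The size `0` stands for the empty set: an empty `X ∩ G_u`, or no core at all.
  have hc : ∀ v, IsGreatest (insert 0 (coreSizes G r v)) (c v) := by
    refine subtree_induction (r := r) hG.connected fun v ih ↦ ?_
    obtain hv | hne := (children G r v).eq_empty_or_nonempty
    · rw [coreSizes_eq_empty_of_children_eq_empty hG hv, hleaf v hv]
      simp
    · rw [hrec v hne]
      simpa using (isGreatest_coreSizes_of_children hG hne ih).insert 0
  exact fun v ↦ Nat.eq_sSup_of_isGreatest_insert_zero zero_notMem_coreSizes (hc v)
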